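/- arXiv:0908.4534 — 3 statements merged into one kernel-verified Lean document; each statement's English description precedes it below -/
import Mathlib

section
/- If λ₁ and λ₂ are two distinct eigenvalues of the random unitary operation Φ with |λ₁| = |λ₂| = 1, then the corresponding eigenspaces are orthogonal with respect to the Hilbert–Schmidt inner product: if Φ(X₁) = λ₁·X₁ and Φ(X₂) = λ₂·X₂, then Tr(X₁†·X₂) = 0. -/
open Matrix BigOperators

open scoped InnerProductSpace ComplexConjugate

/-!
The Hilbert–Schmidt adjoint of `Φ` is `Ψ(Y) = ∑ pᵢ Uᵢᴴ Y Uᵢ`, again a convex combination of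
unitary conjugations and hence a contraction. For a contraction, `⟪X, Ψ X⟫ = conj λ ‖X‖²` with
`|λ| = 1` is the equality case of Cauchy–Schwarz, so `Φ X₂ = λ₂ X₂` forces `Ψ X₂ = conj λ₂ X₂`.
Then `conj λ₁ ⟪X₁, X₂⟫ = ⟪Φ X₁, X₂⟫ = ⟪X₁, Ψ X₂⟫ = conj λ₂ ⟪X₁, X₂⟫`, and `λ₁ ≠ λ₂`.
-/

section Contraction

variable {𝕜 E : Type*} [RCLike 𝕜] [NormedAddCommGroup E] [InnerProductSpace 𝕜 E]

theorem eq_smul_of_norm_le_of_inner_eq {y z : E} {μ : 𝕜} (hμ : ‖μ‖ = 1) (hz : ‖z‖ ≤ ‖y‖)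
    (h : ⟪y, z⟫_𝕜 = μ * ⟪y, y⟫_𝕜) : z = μ • y := by
  have hre : RCLike.re ⟪z, μ • y⟫_𝕜 = ‖y‖ ^ 2 := by
    rw [inner_smul_right, ← inner_conj_symm, h, inner_self_eq_norm_sq_to_K]
    simp [← mul_assoc, RCLike.mul_conj, hμ]
  have hsq : ‖z - μ • y‖ ^ 2 ≤ 0 := by
    rw [norm_sub_sq (𝕜 := 𝕜), hre, norm_smul, hμ, one_mul]
    nlinarith [norm_nonneg z]
  exact sub_eq_zero.mp (norm_eq_zero.mp (pow_eq_zero_iff two_ne_zero |>.mp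
    (le_antisymm hsq (sq_nonneg _))))

variable {Φ Ψ : E → E}

theorem apply_eq_conj_smul_of_adjoint_of_norm_le (hadj : ∀ x y, ⟪Φ x, y⟫_𝕜 = ⟪x, Ψ y⟫_𝕜)
    (hΨ : ∀ y, ‖Ψ y‖ ≤ ‖y‖) {x : E} {c : 𝕜} (hc : ‖c‖ = 1) (hx : Φ x = c • x) :
    Ψ x = conj c • x := by
  refine eq_smul_of_norm_le_of_inner_eq (by simpa using hc) (hΨ x) ?_
  rw [← hadj, hx, inner_smul_left]

theorem inner_eq_zero_of_apply_eq_smul (hadj : ∀ x y, ⟪Φ x, y⟫_𝕜 = ⟪x, Ψ y⟫_𝕜)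
    (hΨ : ∀ y, ‖Ψ y‖ ≤ ‖y‖) {x₁ x₂ : E} {c₁ c₂ : 𝕜} (hne : c₁ ≠ c₂) (hc₂ : ‖c₂‖ = 1)
    (h₁ : Φ x₁ = c₁ • x₁) (h₂ : Φ x₂ = c₂ • x₂) : ⟪x₁, x₂⟫_𝕜 = 0 := by
  have key : conj c₁ * ⟪x₁, x₂⟫_𝕜 = conj c₂ * ⟪x₁, x₂⟫_𝕜 := by
    rw [← inner_smul_left, ← h₁, hadj, apply_eq_conj_smul_of_adjoint_of_norm_le hadj hΨ hc₂ h₂,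
      inner_smul_right]
  exact (mul_eq_mul_right_iff.mp key).resolve_left ((starRingEnd 𝕜).injective.ne hne)

end Contraction

namespace Matrix

variable {m n 𝕜 : Type*} [RCLike 𝕜]

variable (m n 𝕜) in
def hilbertSchmidtEquiv : Matrix m n 𝕜 ≃ₗ[𝕜] EuclideanSpace 𝕜 (m × n) where
  toFun A := WithLp.toLp 2 fun ij => A ij.1 ij.2
  invFun v := Matrix.of fun i j => v (i, j)
  map_add' _ _ := rfl
  map_smul' _ _ := rfl
  left_inv _ := rfl
  right_inv _ := rfl

@[simp]
theorem hilbertSchmidtEquiv_apply (A : Matrix m n 𝕜) (ij : m × n) :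
    hilbertSchmidtEquiv m n 𝕜 A ij = A ij.1 ij.2 :=
  rfl

variable [Fintype m] [Fintype n]

theorem inner_hilbertSchmidtEquiv (A B : Matrix m n 𝕜) :
    ⟪hilbertSchmidtEquiv m n 𝕜 A, hilbertSchmidtEquiv m n 𝕜 B⟫_𝕜 = (Aᴴ * B).trace := by
  simp [PiLp.inner_apply, trace, mul_apply, Fintype.sum_prod_type,
    Finset.sum_comm (γ := m), mul_comm]

theorem norm_hilbertSchmidtEquiv_unitary_conj [DecidableEq n] {W : Matrix n n 𝕜}
    (hW : W ∈ unitaryGroup n 𝕜) (X : Matrix n n 𝕜) :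
    ‖hilbertSchmidtEquiv n n 𝕜 (W * X * Wᴴ)‖ = ‖hilbertSchmidtEquiv n n 𝕜 X‖ := by
  have hWW : Wᴴ * W = 1 := mem_unitaryGroup_iff'.mp hW
  have htr : ((W * X * Wᴴ)ᴴ * (W * X * Wᴴ)).trace = (Xᴴ * X).trace := by
    simp only [conjTranspose_mul, conjTranspose_conjTranspose, Matrix.mul_assoc]
    rw [← Matrix.mul_assoc Wᴴ W, hWW, Matrix.one_mul, trace_mul_comm, Matrix.mul_assoc,
      Matrix.mul_assoc, hWW, Matrix.mul_one]
  rw [norm_eq_sqrt_re_inner (𝕜 := 𝕜), norm_eq_sqrt_re_inner (𝕜 := 𝕜), inner_hilbertSchmidtEquiv,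
    inner_hilbertSchmidtEquiv, htr]

end Matrix

section RandomUnitaryChannel

variable {ι n 𝕜 : Type*} [Fintype ι] [Fintype n] [RCLike 𝕜]

def randomUnitaryChannel (U : ι → Matrix n n 𝕜) (p : ι → ℝ) (ρ : Matrix n n 𝕜) :
    Matrix n n 𝕜 :=
  ∑ i, (p i : 𝕜) • (U i * ρ * (U i)ᴴ)

theorem trace_conjTranspose_randomUnitaryChannel_mul (U : ι → Matrix n n 𝕜) (p : ι → ℝ)
    (X Y : Matrix n n 𝕜) :
    ((randomUnitaryChannel U p X)ᴴ * Y).trace =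
      (Xᴴ * randomUnitaryChannel (fun i => (U i)ᴴ) p Y).trace := by
  simp only [randomUnitaryChannel, conjTranspose_sum, conjTranspose_smul, RCLike.star_def,
    RCLike.conj_ofReal, conjTranspose_mul, conjTranspose_conjTranspose, Matrix.sum_mul,
    Matrix.mul_sum, trace_sum, Matrix.smul_mul, Matrix.mul_smul, trace_smul, Matrix.mul_assoc]
  refine Finset.sum_congr rfl fun i _ => ?_
  rw [trace_mul_comm]
  simp only [Matrix.mul_assoc]

theorem norm_hilbertSchmidtEquiv_randomUnitaryChannel_le [DecidableEq n] {U : ι → Matrix n n 𝕜}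
    (hU : ∀ i, U i ∈ unitaryGroup n 𝕜) {p : ι → ℝ} (hp : ∀ i, 0 ≤ p i) (hpsum : ∑ i, p i = 1)
    (ρ : Matrix n n 𝕜) :
    ‖hilbertSchmidtEquiv n n 𝕜 (randomUnitaryChannel U p ρ)‖ ≤ ‖hilbertSchmidtEquiv n n 𝕜 ρ‖ :=
  calc ‖hilbertSchmidtEquiv n n 𝕜 (randomUnitaryChannel U p ρ)‖
      ≤ ∑ i, ‖(p i : 𝕜) • hilbertSchmidtEquiv n n 𝕜 (U i * ρ * (U i)ᴴ)‖ := by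
        simpa only [randomUnitaryChannel, map_sum, map_smul] using norm_sum_le _ _
    _ = ∑ i, p i * ‖hilbertSchmidtEquiv n n 𝕜 ρ‖ := by
        simp only [norm_smul, norm_hilbertSchmidtEquiv_unitary_conj (hU _), RCLike.norm_ofReal,
          abs_of_nonneg (hp _)]
    _ = ‖hilbertSchmidtEquiv n n 𝕜 ρ‖ := by rw [← Finset.sum_mul, hpsum, one_mul]

end RandomUnitaryChannel

theorem stmt_7_general {d m : ℕ}
    (U : Fin m → Matrix (Fin d) (Fin d) ℂ)
    (hU : ∀ i, U i ∈ Matrix.unitaryGroup (Fin d) ℂ)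
    (p : Fin m → ℝ) (hp : ∀ i, 0 < p i) (hpsum : ∑ i, p i = 1)
    (Φ : Matrix (Fin d) (Fin d) ℂ → Matrix (Fin d) (Fin d) ℂ)
    (hΦ : ∀ ρ, Φ ρ = ∑ i, (p i : ℂ) • (U i * ρ * (U i)ᴴ))
    (lam₁ lam₂ : ℂ) (hne : lam₁ ≠ lam₂)
    (hlam₂ : ‖lam₂‖ = 1)
    (X₁ X₂ : Matrix (Fin d) (Fin d) ℂ)
    (h₁ : Φ X₁ = lam₁ • X₁) (h₂ : Φ X₂ = lam₂ • X₂) :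
    (X₁ᴴ * X₂).trace = 0 := by
  have hΦ_eq : Φ = randomUnitaryChannel U p := funext hΦ
  subst hΦ_eq
  set e := hilbertSchmidtEquiv (Fin d) (Fin d) ℂ
  have hUstar : ∀ i, (U i)ᴴ ∈ unitaryGroup (Fin d) ℂ := fun i => Unitary.star_mem (hU i)
  rw [← inner_hilbertSchmidtEquiv]
  refine inner_eq_zero_of_apply_eq_smul (Φ := e ∘ randomUnitaryChannel U p ∘ e.symm)
    (Ψ := e ∘ randomUnitaryChannel (fun i => (U i)ᴴ) p ∘ e.symm) ?_ ?_ hne hlam₂ ?_ ?_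
  · refine e.surjective.forall₂.2 fun A B => ?_
    simp [e, inner_hilbertSchmidtEquiv, trace_conjTranspose_randomUnitaryChannel_mul]
  · refine e.surjective.forall.2 fun B => ?_
    simpa [e] using
      norm_hilbertSchmidtEquiv_randomUnitaryChannel_le hUstar (fun i => (hp i).le) hpsum B
  · simp [e, h₁]
  · simp [e, h₂]

theorem stmt_7 {d m : ℕ} (hd : 1 ≤ d)
    (U : Fin m → Matrix (Fin d) (Fin d) ℂ)
    (hU : ∀ i, U i ∈ Matrix.unitaryGroup (Fin d) ℂ)
    (p : Fin m → ℝ) (hp : ∀ i, 0 < p i) (hpsum : ∑ i, p i = 1)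
    (Φ : Matrix (Fin d) (Fin d) ℂ → Matrix (Fin d) (Fin d) ℂ)
    (hΦ : ∀ ρ, Φ ρ = ∑ i, (p i : ℂ) • (U i * ρ * (U i)ᴴ))
    (lam₁ lam₂ : ℂ) (hne : lam₁ ≠ lam₂)
    (hlam₁ : ‖lam₁‖ = 1) (hlam₂ : ‖lam₂‖ = 1)
    (X₁ X₂ : Matrix (Fin d) (Fin d) ℂ)
    (h₁ : Φ X₁ = lam₁ • X₁) (h₂ : Φ X₂ = lam₂ • X₂) :
    (X₁ᴴ * X₂).trace = 0 :=
  stmt_7_general U hU p hp hpsum Φ hΦ lam₁ lam₂ hne hlam₂ X₁ X₂ h₁ h₂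
end

section
/- The attractor space is independent of the probability distribution: if Φ(ρ) = Σ_{i=1}^m p_i · U_i ρ U_i† and Ψ(ρ) = Σ_{i=1}^m q_i · U_i ρ U_i† are two random unitary operations built from the same unitary matrices U_i but possibly different probabilities p_i > 0, q_i > 0 (with Σ p_i = Σ q_i = 1), then for every λ ∈ ℂ with |λ| = 1 the eigenspaces coincide: Ker(Φ − λ·id) = Ker(Ψ − λ·id). -/
/-!
Both eigenspaces equal the common eigenspace `{X | ∀ i, U i * X * (U i)ᴴ = λ • X}`.
Conjugation by a unitary is an isometry for the Hilbert–Schmidt norm, so `Φ X = λ • X`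
exhibits `λ • X` as a convex combination, with positive weights, of the points
`U i * X * (U i)ᴴ`, all of norm `‖X‖ = ‖λ • X‖`. The variance identity
`∑ pᵢ ‖Yᵢ - Z‖² = ∑ pᵢ ‖Yᵢ‖² - ‖Z‖²` (for `Z = ∑ pᵢ Yᵢ`) then forces every `Yᵢ = Z`.
-/

open Matrix
open scoped InnerProductSpace ComplexOrder

section InnerProductSpace

variable {𝕜 E ι : Type*} [RCLike 𝕜] [NormedAddCommGroup E] [InnerProductSpace 𝕜 E]

theorem sum_mul_norm_sub_sq_eq {s : Finset ι} {w : ι → ℝ} (hw : ∑ i ∈ s, w i = 1) (y : ι → E) :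
    ∑ i ∈ s, w i * ‖y i - ∑ j ∈ s, (w j : 𝕜) • y j‖ ^ 2 =
      ∑ i ∈ s, w i * ‖y i‖ ^ 2 - ‖∑ j ∈ s, (w j : 𝕜) • y j‖ ^ 2 := by
  set z := ∑ j ∈ s, (w j : 𝕜) • y j
  have hz : ∑ i ∈ s, w i * RCLike.re ⟪y i, z⟫_𝕜 = ‖z‖ ^ 2 := by
    conv_rhs => rw [@norm_sq_eq_re_inner 𝕜, sum_inner, map_sum]
    simp [inner_smul_left]
  simp only [@norm_sub_sq 𝕜, mul_add, mul_sub, Finset.sum_add_distrib, Finset.sum_sub_distrib,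
    ← Finset.sum_mul, hw]
  simp only [mul_left_comm _ (2 : ℝ), ← Finset.mul_sum, hz]
  ring

theorem eq_of_sum_smul_eq_of_norm_le {s : Finset ι} {w : ι → ℝ} {y : ι → E} {z : E}
    (hw₀ : ∀ i ∈ s, 0 < w i) (hw₁ : ∑ i ∈ s, w i = 1) (hy : ∀ i ∈ s, ‖y i‖ ≤ ‖z‖)
    (hz : ∑ i ∈ s, (w i : 𝕜) • y i = z) : ∀ i ∈ s, y i = z := by
  subst hz
  set z := ∑ i ∈ s, (w i : 𝕜) • y i
  have hle : ∑ i ∈ s, w i * ‖y i‖ ^ 2 ≤ ‖z‖ ^ 2 :=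
    calc ∑ i ∈ s, w i * ‖y i‖ ^ 2 ≤ ∑ i ∈ s, w i * ‖z‖ ^ 2 :=
          Finset.sum_le_sum fun i hi ↦ mul_le_mul_of_nonneg_left
            (pow_le_pow_left₀ (norm_nonneg _) (hy i hi) 2) (hw₀ i hi).le
      _ = ‖z‖ ^ 2 := by rw [← Finset.sum_mul, hw₁, one_mul]
  have hnonneg : ∀ i ∈ s, 0 ≤ w i * ‖y i - z‖ ^ 2 := fun i hi ↦
    mul_nonneg (hw₀ i hi).le (sq_nonneg _)
  have hzero : ∑ i ∈ s, w i * ‖y i - z‖ ^ 2 = 0 :=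
    le_antisymm (by rw [sum_mul_norm_sub_sq_eq hw₁]; linarith) (Finset.sum_nonneg hnonneg)
  intro i hi
  simpa [sub_eq_zero, (hw₀ i hi).ne'] using (Finset.sum_eq_zero_iff_of_nonneg hnonneg).mp hzero i hi

end InnerProductSpace

namespace Matrix

variable {n : Type*} [Fintype n] [DecidableEq n]

noncomputable abbrev hilbertSchmidtNormedAddCommGroup : NormedAddCommGroup (Matrix n n ℂ) :=
  toMatrixNormedAddCommGroup 1 PosDef.one

attribute [local instance] hilbertSchmidtNormedAddCommGroup

noncomputable abbrev hilbertSchmidtInnerProductSpace : InnerProductSpace ℂ (Matrix n n ℂ) :=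
  toMatrixInnerProductSpace 1 PosDef.one.posSemidef

attribute [local instance] hilbertSchmidtInnerProductSpace

theorem hilbertSchmidt_norm_unitary_conj {U : Matrix n n ℂ} (hU : U ∈ unitaryGroup n ℂ)
    (X : Matrix n n ℂ) : ‖U * X * Uᴴ‖ = ‖X‖ := by
  have hinner : ⟪U * X * Uᴴ, U * X * Uᴴ⟫_ℂ = ⟪X, X⟫_ℂ := by
    change (U * X * Uᴴ * 1 * (U * X * Uᴴ)ᴴ).trace = (X * 1 * Xᴴ).trace
    have hUU : Uᴴ * U = 1 := mem_unitaryGroup_iff'.mp hU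
    simp only [Matrix.mul_one, conjTranspose_mul, conjTranspose_conjTranspose]
    rw [show U * X * Uᴴ * (U * (Xᴴ * Uᴴ)) = U * (X * Xᴴ) * Uᴴ by
      simp only [Matrix.mul_assoc, ← Matrix.mul_assoc Uᴴ U, hUU, Matrix.one_mul],
      trace_mul_cycle, hUU, Matrix.one_mul]
  rw [@norm_eq_sqrt_re_inner ℂ, @norm_eq_sqrt_re_inner ℂ, hinner]

theorem sum_smul_unitary_conj_eq_smul_iff {ι : Type*} [Fintype ι] {U : ι → Matrix n n ℂ}
    (hU : ∀ i, U i ∈ unitaryGroup n ℂ) {p : ι → ℝ} (hp : ∀ i, 0 < p i) (hpsum : ∑ i, p i = 1)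
    {lam : ℂ} (hlam : ‖lam‖ = 1) (X : Matrix n n ℂ) :
    ∑ i, (p i : ℂ) • (U i * X * (U i)ᴴ) = lam • X ↔ ∀ i, U i * X * (U i)ᴴ = lam • X := by
  refine ⟨fun h i ↦ eq_of_sum_smul_eq_of_norm_le (fun i _ ↦ hp i) hpsum
    (fun i _ ↦ ?_) h i (Finset.mem_univ i), fun h ↦ ?_⟩
  · rw [hilbertSchmidt_norm_unitary_conj (hU i), norm_smul, hlam, one_mul]
  · simp only [h, ← Finset.sum_smul, ← Complex.ofReal_sum, hpsum, Complex.ofReal_one, one_smul]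

end Matrix

theorem stmt_13_general {d m : ℕ}
    (U : Fin m → Matrix (Fin d) (Fin d) ℂ)
    (hU : ∀ i, U i ∈ Matrix.unitaryGroup (Fin d) ℂ)
    (p q : Fin m → ℝ)
    (hp : ∀ i, 0 < p i) (hq : ∀ i, 0 < q i)
    (hpsum : ∑ i, p i = 1) (hqsum : ∑ i, q i = 1)
    (Φ Ψ : Matrix (Fin d) (Fin d) ℂ → Matrix (Fin d) (Fin d) ℂ)
    (hΦ : ∀ ρ, Φ ρ = ∑ i, (p i : ℂ) • (U i * ρ * (U i)ᴴ))
    (hΨ : ∀ ρ, Ψ ρ = ∑ i, (q i : ℂ) • (U i * ρ * (U i)ᴴ))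
    (lam : ℂ) (hlam : ‖lam‖ = 1) :
    {X : Matrix (Fin d) (Fin d) ℂ | Φ X = lam • X} =
      {X : Matrix (Fin d) (Fin d) ℂ | Ψ X = lam • X} := by
  ext X
  simp only [Set.mem_ofPred_eq, hΦ, hΨ, sum_smul_unitary_conj_eq_smul_iff hU hp hpsum hlam,
    sum_smul_unitary_conj_eq_smul_iff hU hq hqsum hlam]

theorem stmt_13 {d m : ℕ} (hd : 1 ≤ d)
    (U : Fin m → Matrix (Fin d) (Fin d) ℂ)
    (hU : ∀ i, U i ∈ Matrix.unitaryGroup (Fin d) ℂ)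
    (p q : Fin m → ℝ)
    (hp : ∀ i, 0 < p i) (hq : ∀ i, 0 < q i)
    (hpsum : ∑ i, p i = 1) (hqsum : ∑ i, q i = 1)
    (Φ Ψ : Matrix (Fin d) (Fin d) ℂ → Matrix (Fin d) (Fin d) ℂ)
    (hΦ : ∀ ρ, Φ ρ = ∑ i, (p i : ℂ) • (U i * ρ * (U i)ᴴ))
    (hΨ : ∀ ρ, Ψ ρ = ∑ i, (q i : ℂ) • (U i * ρ * (U i)ᴴ))
    (lam : ℂ) (hlam : ‖lam‖ = 1) :
    {X : Matrix (Fin d) (Fin d) ℂ | Φ X = lam • X} =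
      {X : Matrix (Fin d) (Fin d) ℂ | Ψ X = lam • X} :=
  stmt_13_general U hU p q hp hq hpsum hqsum Φ Ψ hΦ hΨ lam hlam
end

section
/- If the unitary matrices U_1, …, U_m form an irreducible set (they have no common invariant subspace of ℂ^d other than {0} and ℂ^d), and X ≠ 0 is a d×d complex matrix satisfying Φ(X) = λ·X with |λ| = 1, then X is an invertible matrix and λ is a root of unity (λ^k = 1 for some natural number k ≥ 1). -/
/-!
For the Hilbert–Schmidt norm, conjugation by a unitary is an isometry, so `λ • X = Φ X` is a convex
combination of the points `U i * X * (U i)ᴴ`, all lying on the sphere of radius `‖X‖ = ‖λ • X‖`.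
By strict convexity of the Hilbert–Schmidt norm they all equal `λ • X`, i.e. `U i * X = λ • X * U i`.
Then `ker X` is invariant under every `U i`, so by irreducibility it is trivial (as `X ≠ 0`), and
taking determinants in `U i * X * (U i)ᴴ = λ • X` gives `λ ^ d = 1`.
-/

open Matrix BigOperators

theorem eq_sum_smul_of_norm_le_norm_sum {ι V : Type*} [NormedAddCommGroup V] [NormedSpace ℝ V]
    [StrictConvexSpace ℝ V] {t : Finset ι} {w : ι → ℝ} {z : ι → V} (hw : ∀ i ∈ t, 0 < w i)
    (hw₁ : ∑ i ∈ t, w i = 1) (hz : ∀ i ∈ t, ‖z i‖ ≤ ‖∑ k ∈ t, w k • z k‖) {j : ι} (hj : j ∈ t) :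
    z j = ∑ k ∈ t, w k • z k := by
  have hconst : ∀ i ∈ t, z i = z j := by
    intro i hi
    by_contra hij
    exact (norm_sum_lt_of_strictConvexSpace (fun k hk => (hw k hk).le) hw₁ hi hj hij
      (hw i hi).ne' (hw j hj).ne' hz).false
  rw [Finset.sum_congr rfl fun k hk => by rw [hconst k hk], ← Finset.sum_smul, hw₁, one_smul]

namespace Matrix

section CommRing

variable {n R : Type*} [Fintype n] [CommRing R]

theorem map_ker_mulVecLin_le_of_mul_eq_smul_mul {U X : Matrix n n R} {c : R}
    (h : X * U = c • (U * X)) :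
    (LinearMap.ker X.mulVecLin).map U.mulVecLin ≤ LinearMap.ker X.mulVecLin := by
  rintro _ ⟨v, hv, rfl⟩
  rw [SetLike.mem_coe, LinearMap.mem_ker, mulVecLin_apply] at hv
  rw [LinearMap.mem_ker, mulVecLin_apply, mulVecLin_apply, mulVec_mulVec, h, smul_mulVec,
    ← mulVec_mulVec, hv, mulVec_zero, smul_zero]

end CommRing

variable {n : Type*} [Fintype n] [DecidableEq n]

theorem isUnit_of_map_ker_mulVecLin_le {K ι : Type*} [Field K] {U : ι → Matrix n n K}
    (hirr : ∀ W : Submodule K (n → K), (∀ i, W.map (U i).mulVecLin ≤ W) → W = ⊥ ∨ W = ⊤)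
    {X : Matrix n n K} (hX : X ≠ 0)
    (hinv : ∀ i, (LinearMap.ker X.mulVecLin).map (U i).mulVecLin ≤ LinearMap.ker X.mulVecLin) :
    IsUnit X := by
  rcases hirr _ hinv with hbot | htop
  · exact mulVec_injective_iff_isUnit.mp (LinearMap.ker_eq_bot.mp hbot)
  · exact absurd (toLin'.injective ((LinearMap.ker_eq_top.mp htop).trans (map_zero _).symm)) hX

section Unitary

variable {K : Type*} [Field K] [StarRing K] {U X : Matrix n n K}

theorem mul_eq_inv_smul_mul_of_unitary_conj_eq_smul (hU : U ∈ unitaryGroup n K) {c : K}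
    (hc : c ≠ 0) (h : U * X * Uᴴ = c • X) : X * U = c⁻¹ • (U * X) := by
  have hUU : Uᴴ * U = 1 := by simpa [star_eq_conjTranspose] using mem_unitaryGroup_iff'.mp hU
  rw [eq_inv_smul_iff₀ hc, ← smul_mul, ← h, Matrix.mul_assoc _ Uᴴ, hUU, Matrix.mul_one]

theorem pow_card_eq_one_of_unitary_conj_eq_smul (hU : U ∈ unitaryGroup n K) (hX : IsUnit X)
    {c : K} (h : U * X * Uᴴ = c • X) : c ^ Fintype.card n = 1 := by
  have hdetU : U.det * Uᴴ.det = 1 := by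
    rw [← det_mul, show Uᴴ = star U from rfl, mem_unitaryGroup_iff.mp hU, det_one]
  have hdet := congrArg det h
  rw [det_mul, det_mul, det_smul, mul_right_comm, hdetU, one_mul] at hdet
  exact (mul_eq_right₀ ((isUnit_iff_isUnit_det X).mp hX).ne_zero).mp hdet.symm

end Unitary

section HilbertSchmidt

open scoped ComplexOrder

noncomputable local instance : NormedAddCommGroup (Matrix n n ℂ) :=
  toMatrixNormedAddCommGroup 1 PosDef.one

noncomputable local instance : InnerProductSpace ℂ (Matrix n n ℂ) :=
  toMatrixInnerProductSpace 1 PosDef.one.posSemidef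

theorem norm_unitary_mul_mul_conjTranspose {U : Matrix n n ℂ} (hU : U ∈ unitaryGroup n ℂ)
    (A : Matrix n n ℂ) : ‖U * A * Uᴴ‖ = ‖A‖ := by
  have hUU : Uᴴ * U = 1 := by simpa [star_eq_conjTranspose] using mem_unitaryGroup_iff'.mp hU
  have hinner : inner ℂ (U * A * Uᴴ) (U * A * Uᴴ) = inner ℂ A A := by
    change trace (U * A * Uᴴ * 1 * (U * A * Uᴴ)ᴴ) = trace (A * 1 * Aᴴ)
    simp only [Matrix.mul_one, conjTranspose_mul, conjTranspose_conjTranspose]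
    rw [show U * A * Uᴴ * (U * (Aᴴ * Uᴴ)) = U * (A * (Uᴴ * U) * Aᴴ) * Uᴴ by
      simp only [Matrix.mul_assoc], hUU, Matrix.mul_one, trace_mul_cycle, ← Matrix.mul_assoc, hUU,
      Matrix.one_mul]
  rw [norm_eq_sqrt_re_inner (𝕜 := ℂ), norm_eq_sqrt_re_inner (𝕜 := ℂ), hinner]

theorem unitary_conj_eq_smul_of_sum_eq_smul {ι : Type*} [Fintype ι] {U : ι → Matrix n n ℂ}
    (hU : ∀ i, U i ∈ unitaryGroup n ℂ) {p : ι → ℝ} (hp : ∀ i, 0 < p i) (hpsum : ∑ i, p i = 1)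
    {lam : ℂ} (hlam : ‖lam‖ = 1) {X : Matrix n n ℂ}
    (h : ∑ i, (p i : ℂ) • (U i * X * (U i)ᴴ) = lam • X) (i : ι) :
    U i * X * (U i)ᴴ = lam • X := by
  -- `UniformConvexSpace` depends on the norm only, so borrowing the real inner product structure
  -- here does not clash with the `ℝ`-module structure of `Matrix n n ℂ`.
  have : UniformConvexSpace (Matrix n n ℂ) :=
    let := InnerProductSpace.rclikeToReal ℂ (Matrix n n ℂ); inferInstance
  simp only [Complex.coe_smul] at h
  have hz : ∀ j ∈ Finset.univ, ‖U j * X * (U j)ᴴ‖ ≤ ‖∑ k, p k • (U k * X * (U k)ᴴ)‖ := by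
    intro j _
    rw [h, norm_smul, hlam, one_mul, norm_unitary_mul_mul_conjTranspose (hU j)]
  rw [← h]
  exact eq_sum_smul_of_norm_le_norm_sum (fun i _ => hp i) hpsum hz (Finset.mem_univ i)

end HilbertSchmidt

end Matrix

theorem stmt_17 {d m : ℕ} (hd : 1 ≤ d)
    (U : Fin m → Matrix (Fin d) (Fin d) ℂ)
    (hU : ∀ i, U i ∈ Matrix.unitaryGroup (Fin d) ℂ)
    (hirr : ∀ W : Submodule ℂ (Fin d → ℂ),
      (∀ i, W.map (U i).mulVecLin ≤ W) → W = ⊥ ∨ W = ⊤)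
    (p : Fin m → ℝ) (hp : ∀ i, 0 < p i) (hpsum : ∑ i, p i = 1)
    (Φ : Matrix (Fin d) (Fin d) ℂ → Matrix (Fin d) (Fin d) ℂ)
    (hΦ : ∀ ρ, Φ ρ = ∑ i, (p i : ℂ) • (U i * ρ * (U i)ᴴ))
    (lam : ℂ) (hlam : ‖lam‖ = 1)
    (X : Matrix (Fin d) (Fin d) ℂ) (hX : X ≠ 0)
    (heig : Φ X = lam • X) :
    IsUnit X ∧ ∃ k : ℕ, 1 ≤ k ∧ lam ^ k = 1 := by
  have hconj : ∀ i, U i * X * (U i)ᴴ = lam • X :=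
    unitary_conj_eq_smul_of_sum_eq_smul hU hp hpsum hlam (by rw [← hΦ, heig])
  have hlam₀ : lam ≠ 0 := norm_ne_zero_iff.mp (by rw [hlam]; exact one_ne_zero)
  have hXunit : IsUnit X := isUnit_of_map_ker_mulVecLin_le hirr hX fun i =>
    map_ker_mulVecLin_le_of_mul_eq_smul_mul
      (mul_eq_inv_smul_mul_of_unitary_conj_eq_smul (hU i) hlam₀ (hconj i))
  obtain ⟨i, -, -⟩ := Finset.exists_ne_zero_of_sum_ne_zero (hpsum ▸ one_ne_zero)
  refine ⟨hXunit, d, hd, ?_⟩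
  simpa using pow_card_eq_one_of_unitary_conj_eq_smul (hU i) hXunit (hconj i)
end
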